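/- arXiv:cs/0312007 — 4 statements merged into one kernel-verified Lean document; each statement's English description precedes it below -/
import Mathlib

section
/- For positive integers k, L, D, define recursively α₁ = 2^L and α_j = 1 + α₁·(D+1)^{j-1}·α_{j-1}^D for 2 ≤ j ≤ k. Then for every nonzero integer polynomial h in k variables of degree at most D whose coefficients all have absolute value less than 2^L, we have h(α₁, …, α_k) ≠ 0. -/
set_option maxHeartbeats 4000000 in
/-- For positive integers `k, L, D`, define recursively `α 1 = 2^L` and
`α j = 1 + α 1 * (D+1)^(j-1) * (α (j-1))^D` for `2 ≤ j ≤ k`.  Then every nonzero integer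
polynomial `h` in `k` variables of total degree at most `D` whose coefficients all have
absolute value less than `2^L` satisfies `h (α 1, …, α k) ≠ 0`. -/
theorem stmt_0 (k L D : ℕ) (hk : 0 < k) (hL : 0 < L) (hD : 0 < D)
    (α : ℕ → ℤ) (hα1 : α 1 = 2 ^ L)
    (hαrec : ∀ j, 2 ≤ j → j ≤ k → α j = 1 + α 1 * ((D : ℤ) + 1) ^ (j - 1) * α (j - 1) ^ D)
    (h : MvPolynomial (Fin k) ℤ) (hne : h ≠ 0) (hdeg : h.totalDegree ≤ D)
    (hcoeff : ∀ c : Fin k →₀ ℕ, |MvPolynomial.coeff c h| < 2 ^ L) :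
    MvPolynomial.eval (fun i : Fin k => α (i.val + 1)) h ≠ 0 := by
  classical
  -- the (0-indexed) evaluation points, as an opaque constant
  obtain ⟨A, hAdef⟩ : ∃ A : ℕ → ℤ, A = fun i => α (i + 1) := ⟨_, rfl⟩
  have hA0 : A 0 = 2 ^ L := by simp [hAdef, hα1]
  have hrec : ∀ m, 1 ≤ m → m < k →
      A m = 1 + 2 ^ L * ((D : ℤ) + 1) ^ m * A (m - 1) ^ D := by
    intro m h1 h2
    have := hαrec (m + 1) (by omega) (by omega)
    simp only [hAdef, Nat.add_sub_cancel] at this ⊢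
    rw [this, hα1, Nat.sub_add_cancel h1]
  have h2L : (2:ℤ) ≤ 2 ^ L := by
    calc (2:ℤ) = 2 ^ 1 := (pow_one 2).symm
    _ ≤ 2 ^ L := pow_le_pow_right₀ (by norm_num) hL
  have hA2 : ∀ m, m < k → 2 ≤ A m := by
    intro m
    induction m with
    | zero => intro _; rw [hA0]; exact h2L
    | succ n ih =>
      intro hm
      have h2 : 2 ≤ A n := ih (by omega)
      have hrw := hrec (n + 1) (by omega) hm
      simp only [Nat.add_sub_cancel] at hrw
      rw [hrw]
      have h1 : (1:ℤ) ≤ 2 ^ L := by linarith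
      have h3 : (1:ℤ) ≤ ((D:ℤ) + 1) ^ (n + 1) := one_le_pow₀ (by omega)
      have h4 : (1:ℤ) ≤ A n ^ D := one_le_pow₀ (by linarith)
      have h5 : (1:ℤ) ≤ ((D:ℤ) + 1) ^ (n + 1) * A n ^ D := by nlinarith
      nlinarith
  have hAstep : ∀ j, j + 1 < k → A j ≤ A (j + 1) := by
    intro j hj
    have hrw := hrec (j + 1) (by omega) hj
    simp only [Nat.add_sub_cancel] at hrw
    have h2 : 2 ≤ A j := hA2 j (by omega)
    have h1 : (1:ℤ) ≤ 2 ^ L := by linarith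
    have h3 : (1:ℤ) ≤ ((D:ℤ) + 1) ^ (j + 1) := one_le_pow₀ (by omega)
    have h4 : A j ≤ A j ^ D := le_self_pow₀ (by linarith) hD.ne'
    have h6 : (0:ℤ) ≤ A j ^ D := by positivity
    have h5 : (1:ℤ) ≤ 2 ^ L * ((D:ℤ) + 1) ^ (j + 1) := by nlinarith
    nlinarith
  have hAmono : ∀ i j, i ≤ j → j < k → A i ≤ A j := by
    intro i j
    induction j with
    | zero =>
      intro hij _
      obtain rfl := Nat.le_zero.mp hij
      exact le_refl _
    | succ n ih =>
      intro hij hjk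
      rcases Nat.eq_or_lt_of_le hij with rfl | hlt
      · exact le_refl _
      · exact (ih (by omega) (by omega)).trans (hAstep n hjk)
  obtain ⟨w, hwdef⟩ : ∃ w : (Fin k →₀ ℕ) → ℤ, w = fun c => |MvPolynomial.coeff c h| :=
    ⟨_, rfl⟩
  have hSne : h.support.Nonempty := MvPolynomial.support_nonempty.mpr hne
  have hsum : ∀ c ∈ h.support, ∑ i : Fin k, c i ≤ D := by
    intro c hc
    have h1 : (c.sum fun _ e => e) ≤ h.totalDegree := MvPolynomial.le_totalDegree hc
    have h2 : (c.sum fun _ e => e) = ∑ i : Fin k, c i := Finsupp.sum_fintype _ _ (fun _ => rfl)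
    omega
  have hcD : ∀ c ∈ h.support, ∀ i : Fin k, c i ≤ D := by
    intro c hc i
    have := Finset.single_le_sum (f := fun i : Fin k => c i) (fun _ _ => Nat.zero_le _)
      (Finset.mem_univ i)
    exact le_trans this (hsum c hc)
  obtain ⟨v, hvdef⟩ : ∃ v : (Fin k →₀ ℕ) → ℤ, v = fun c => ∏ i : Fin k, A i.1 ^ c i :=
    ⟨_, rfl⟩
  have hvpos : ∀ c, 0 < v c := by
    intro c
    rw [hvdef]
    apply Finset.prod_pos
    intro i _
    exact pow_pos (by have := hA2 i.1 i.2; linarith) _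
  obtain ⟨cstar, hcstarS, hmax⟩ := Finset.exists_max_image h.support v hSne
  -- low and high partial products
  obtain ⟨Q, hQdef⟩ : ∃ Q : ℕ → (Fin k →₀ ℕ) → ℤ,
      Q = fun m c => ∏ i ∈ Finset.univ.filter (fun i : Fin k => i.1 < m), A i.1 ^ c i :=
    ⟨_, rfl⟩
  obtain ⟨Hi, hHidef⟩ : ∃ Hi : ℕ → (Fin k →₀ ℕ) → ℤ,
      Hi = fun m c => ∏ i ∈ Finset.univ.filter (fun i : Fin k => m ≤ i.1), A i.1 ^ c i :=
    ⟨_, rfl⟩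
  have hQpos : ∀ m c, 0 < Q m c := by
    intro m c
    rw [hQdef]
    apply Finset.prod_pos
    intro i _
    exact pow_pos (by have := hA2 i.1 i.2; linarith) _
  have hHipos : ∀ m c, 0 < Hi m c := by
    intro m c
    rw [hHidef]
    apply Finset.prod_pos
    intro i _
    exact pow_pos (by have := hA2 i.1 i.2; linarith) _
  have hvsplit : ∀ m c, v c = Q m c * Hi m c := by
    intro m c
    simp only [hvdef, hQdef, hHidef]
    rw [← Finset.prod_filter_mul_prod_filter_not Finset.univ (fun i : Fin k => i.1 < m)]
    congr 1
    apply Finset.prod_congr _ (fun _ _ => rfl)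
    ext i; simp [not_lt]
  have hHisplit : ∀ m (hm : m < k) c,
      Hi m c = A m ^ c ⟨m, hm⟩ * Hi (m + 1) c := by
    intro m hm c
    simp only [hHidef]
    have hset : Finset.univ.filter (fun i : Fin k => m ≤ i.1)
        = insert (⟨m, hm⟩ : Fin k) (Finset.univ.filter (fun i : Fin k => m + 1 ≤ i.1)) := by
      ext i
      simp only [Finset.mem_filter, Finset.mem_univ, true_and, Finset.mem_insert, Fin.ext_iff]
      omega
    rw [hset, Finset.prod_insert (by simp)]
  have hQsplit : ∀ m (hm : m < k) c,
      Q (m + 1) c = Q m c * A m ^ c ⟨m, hm⟩ := by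
    intro m hm c
    simp only [hQdef]
    have hset : Finset.univ.filter (fun i : Fin k => i.1 < m + 1)
        = insert (⟨m, hm⟩ : Fin k) (Finset.univ.filter (fun i : Fin k => i.1 < m)) := by
      ext i
      simp only [Finset.mem_filter, Finset.mem_univ, true_and, Finset.mem_insert, Fin.ext_iff]
      omega
    rw [hset, Finset.prod_insert (by simp), mul_comm]
  -- uniform upper bound for the low part
  obtain ⟨β, hβdef⟩ : ∃ β : ℕ → ℤ, β = fun m => if m = 0 then 1 else A (m - 1) ^ D :=
    ⟨_, rfl⟩
  have hQbound : ∀ m, m ≤ k → ∀ c ∈ h.support, Q m c ≤ β m := by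
    intro m hm c hc
    match m with
    | 0 =>
      have hset : Finset.univ.filter (fun i : Fin k => i.1 < 0) = ∅ := by
        ext i; simp
      simp [hQdef, hset, hβdef]
    | (n + 1) =>
      have hnk : n < k := by omega
      have h1 : Q (n + 1) c ≤ ∏ i ∈ Finset.univ.filter (fun i : Fin k => i.1 < n + 1),
          A n ^ c i := by
        rw [hQdef]
        apply Finset.prod_le_prod
        · intro i _
          exact pow_nonneg (by have := hA2 i.1 i.2; linarith) _
        · intro i hi
          simp only [Finset.mem_filter] at hi
          exact pow_le_pow_left₀ (by have := hA2 i.1 i.2; linarith)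
            (hAmono i.1 n (by omega) hnk) _
      have h2 : (∏ i ∈ Finset.univ.filter (fun i : Fin k => i.1 < n + 1), A n ^ c i)
          = A n ^ (∑ i ∈ Finset.univ.filter (fun i : Fin k => i.1 < n + 1), c i) :=
        Finset.prod_pow_eq_pow_sum _ _ _
      have h3 : (∑ i ∈ Finset.univ.filter (fun i : Fin k => i.1 < n + 1), c i) ≤ D := by
        refine le_trans (Finset.sum_le_sum_of_subset (Finset.filter_subset _ _)) (hsum c hc)
      have h4 : A n ^ (∑ i ∈ Finset.univ.filter (fun i : Fin k => i.1 < n + 1), c i)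
          ≤ A n ^ D := pow_le_pow_right₀ (by have := hA2 n hnk; linarith) h3
      have hβ : β (n + 1) = A n ^ D := by simp [hβdef]
      rw [hβ]
      calc Q (n+1) c ≤ _ := h1
        _ = _ := h2
        _ ≤ A n ^ D := h4
  have hβpos : ∀ m, m < k → 1 ≤ β m := by
    intro m hm
    match m with
    | 0 => simp [hβdef]
    | (n + 1) =>
      have hβ : β (n + 1) = A n ^ D := by simp [hβdef]
      rw [hβ]
      exact one_le_pow₀ (by have := hA2 n (by omega); linarith)
  have hKB : ∀ m, m < k → ((D:ℤ) + 1) ^ m * ((2 ^ L - 1) * β m) ≤ A m - 1 := by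
    intro m hm
    match m with
    | 0 => simp [hβdef, hA0]
    | (n + 1) =>
      have hrw := hrec (n + 1) (by omega) hm
      simp only [Nat.add_sub_cancel] at hrw
      have hβrw : β (n + 1) = A n ^ D := by simp [hβdef]
      rw [hβrw, hrw]
      have h3 : (0:ℤ) ≤ ((D:ℤ) + 1) ^ (n + 1) := by positivity
      have h4 : (0:ℤ) ≤ A n ^ D := pow_nonneg (by have := hA2 n (by omega); linarith) _
      nlinarith
  have hβle : ∀ m, m < k → β m ≤ A m - 1 := by
    intro m hm
    have h1 := hKB m hm
    have h2 := hβpos m hm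
    have h3 : (1:ℤ) ≤ ((D:ℤ) + 1) ^ m := one_le_pow₀ (by omega)
    have h4 : (1:ℤ) ≤ 2 ^ L - 1 := by linarith
    have h5 : β m ≤ (2 ^ L - 1) * β m := le_mul_of_one_le_left (by linarith) h4
    have h6 : (2 ^ L - 1) * β m ≤ ((D:ℤ) + 1) ^ m * ((2 ^ L - 1) * β m) :=
      le_mul_of_one_le_left (by nlinarith) h3
    linarith
  -- key maximality property of cstar
  have hmaxprop : ∀ m (hm : m < k), ∀ c ∈ h.support,
      (∀ i : Fin k, m + 1 ≤ i.1 → c i = cstar i) → c ⟨m, hm⟩ ≤ cstar ⟨m, hm⟩ := by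
    intro m hm c hc hagree
    by_contra hgt
    push_neg at hgt
    have hHieq : Hi (m + 1) c = Hi (m + 1) cstar := by
      simp only [hHidef]
      apply Finset.prod_congr rfl
      intro i hi
      simp only [Finset.mem_filter] at hi
      rw [hagree i hi.2]
    have hApos : (0:ℤ) < A m := by have := hA2 m hm; linarith
    have hHpos := hHipos (m + 1) cstar
    have hvc : v c = Q m c * (A m ^ c ⟨m, hm⟩ * Hi (m + 1) c) := by
      rw [hvsplit m c, hHisplit m hm c]
    have hvcs : v cstar = Q m cstar * (A m ^ cstar ⟨m, hm⟩ * Hi (m + 1) cstar) := by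
      rw [hvsplit m cstar, hHisplit m hm cstar]
    have hlt : v cstar < v c := by
      rw [hvc, hvcs, hHieq]
      have h1 : Q m cstar ≤ A m - 1 := le_trans (hQbound m (by omega) cstar hcstarS) (hβle m hm)
      have h2 : (1:ℤ) ≤ Q m c := hQpos m c
      have h3 : A m ^ cstar ⟨m, hm⟩ * A m ≤ A m ^ c ⟨m, hm⟩ := by
        rw [← pow_succ]
        exact pow_le_pow_right₀ (by linarith) hgt
      have h4 : (0:ℤ) < A m ^ cstar ⟨m, hm⟩ := pow_pos hApos _
      have h5 : (0:ℤ) < A m ^ c ⟨m, hm⟩ := pow_pos hApos _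
      have s1 : Q m cstar * (A m ^ cstar ⟨m, hm⟩ * Hi (m + 1) cstar)
          ≤ (A m - 1) * (A m ^ cstar ⟨m, hm⟩ * Hi (m + 1) cstar) :=
        mul_le_mul_of_nonneg_right h1 (le_of_lt (mul_pos h4 hHpos))
      have s2 : (A m - 1) * (A m ^ cstar ⟨m, hm⟩ * Hi (m + 1) cstar)
          < A m ^ cstar ⟨m, hm⟩ * A m * Hi (m + 1) cstar := by
        nlinarith [mul_pos h4 hHpos]
      have s3 : A m ^ cstar ⟨m, hm⟩ * A m * Hi (m + 1) cstar
          ≤ A m ^ c ⟨m, hm⟩ * Hi (m + 1) cstar :=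
        mul_le_mul_of_nonneg_right h3 (le_of_lt hHpos)
      have s4 : A m ^ c ⟨m, hm⟩ * Hi (m + 1) cstar
          ≤ Q m c * (A m ^ c ⟨m, hm⟩ * Hi (m + 1) cstar) :=
        le_mul_of_one_le_left (le_of_lt (mul_pos h5 hHpos)) h2
      linarith
    exact absurd (hmax c hc) (not_le.mpr hlt)
  -- coefficient bounds
  have hwle : ∀ c, w c ≤ 2 ^ L - 1 := by
    intro c
    have h1 := hcoeff c
    simp only [hwdef]
    linarith [Int.lt_iff_add_one_le.mp h1]
  have hwpos : ∀ c ∈ h.support, 1 ≤ w c := by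
    intro c hc
    simp only [hwdef]
    exact Int.one_le_abs (MvPolynomial.mem_support_iff.mp hc)
  have hwnn : ∀ c, 0 ≤ w c := by
    intro c
    simp only [hwdef]
    exact abs_nonneg _
  -- the main induction
  have key : ∀ m, m ≤ k →
      ∑ c ∈ h.support.filter (fun c => c ≠ cstar ∧ ∀ i : Fin k, m ≤ i.1 → c i = cstar i),
        w c * v c ≤ (Q m cstar - 1) * Hi m cstar := by
    intro m
    induction m with
    | zero =>
      intro _
      have hempty : h.support.filter
          (fun c => c ≠ cstar ∧ ∀ i : Fin k, 0 ≤ i.1 → c i = cstar i) = ∅ := by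
        ext c
        simp only [Finset.mem_filter, Finset.notMem_empty, iff_false]
        rintro ⟨-, hne', hall⟩
        exact hne' (Finsupp.ext (fun i => hall i (Nat.zero_le _)))
      rw [hempty, Finset.sum_empty]
      have hQ0 : Q 0 cstar = 1 := by
        have hset : Finset.univ.filter (fun i : Fin k => i.1 < 0) = ∅ := by ext i; simp
        simp [hQdef, hset]
      rw [hQ0]
      simp
    | succ m ih =>
      intro hmk
      have hm : m < k := by omega
      -- split the sum
      rw [← Finset.sum_filter_add_sum_filter_not
        (h.support.filter (fun c => c ≠ cstar ∧ ∀ i : Fin k, m + 1 ≤ i.1 → c i = cstar i))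
        (fun c => c ⟨m, hm⟩ = cstar ⟨m, hm⟩)]
      have hsetT : (h.support.filter
          (fun c => c ≠ cstar ∧ ∀ i : Fin k, m + 1 ≤ i.1 → c i = cstar i)).filter
          (fun c => c ⟨m, hm⟩ = cstar ⟨m, hm⟩)
          = h.support.filter (fun c => c ≠ cstar ∧ ∀ i : Fin k, m ≤ i.1 → c i = cstar i) := by
        ext c
        simp only [Finset.mem_filter, Finset.mem_univ, true_and]
        constructor
        · rintro ⟨⟨hcS, hne', hag⟩, hMM⟩
          refine ⟨hcS, hne', fun i hi => ?_⟩
          rcases Nat.eq_or_lt_of_le hi with heq | hlt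
          · have hiM : i = ⟨m, hm⟩ := Fin.ext heq.symm
            rw [hiM]; exact hMM
          · exact hag i hlt
        · rintro ⟨hcS, hne', hag⟩
          exact ⟨⟨hcS, hne', fun i hi => hag i (by omega)⟩, hag ⟨m, hm⟩ (le_refl m)⟩
      rw [hsetT]
      set N : Finset (Fin k →₀ ℕ) := (h.support.filter
          (fun c => c ≠ cstar ∧ ∀ i : Fin k, m + 1 ≤ i.1 → c i = cstar i)).filter
          (fun c => ¬ c ⟨m, hm⟩ = cstar ⟨m, hm⟩) with hNdef
      clear_value N
      -- every member of N has c ⟨m, hm⟩ < cstar ⟨m, hm⟩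
      have hNlt : ∀ c ∈ N, c ⟨m, hm⟩ ∈ Finset.range (cstar ⟨m, hm⟩) := by
        intro c hc
        rw [hNdef, Finset.mem_filter, Finset.mem_filter] at hc
        rw [Finset.mem_range]
        exact lt_of_le_of_ne (hmaxprop m hm c hc.1.1 hc.1.2.2) hc.2
      have hApos : (0:ℤ) < A m := lt_of_lt_of_le zero_lt_two (hA2 m hm)
      have hHpos := hHipos (m + 1) cstar
      -- fiberwise bound
      have hfiber : ∀ t ∈ Finset.range (cstar ⟨m, hm⟩),
          ∑ c ∈ N.filter (fun c => c ⟨m, hm⟩ = t), w c * v c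
            ≤ (A m - 1) * (A m ^ t * Hi (m + 1) cstar) := by
        intro t _
        have hXpos : (0:ℤ) < A m ^ t * Hi (m + 1) cstar :=
          mul_pos (pow_pos hApos t) hHpos
        -- each term is bounded
        have hterm : ∀ c ∈ N.filter (fun c => c ⟨m, hm⟩ = t),
            w c * v c ≤ (2 ^ L - 1) * (β m * (A m ^ t * Hi (m + 1) cstar)) := by
          intro c hc
          rw [hNdef, Finset.mem_filter, Finset.mem_filter, Finset.mem_filter] at hc
          obtain ⟨⟨⟨hcS, -, hag⟩, -⟩, hct⟩ := hc
          have hHieq : Hi (m + 1) c = Hi (m + 1) cstar := by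
            simp only [hHidef]
            apply Finset.prod_congr rfl
            intro i hi
            simp only [Finset.mem_filter] at hi
            rw [hag i hi.2]
          have hvc : v c = Q m c * (A m ^ t * Hi (m + 1) cstar) := by
            rw [hvsplit m c, hHisplit m hm c, hHieq, hct]
          have h1 : w c ≤ 2 ^ L - 1 := hwle c
          have h2 : Q m c ≤ β m := hQbound m (by omega) c hcS
          have h5 : (0:ℤ) < Q m c := hQpos m c
          have t1 : w c * v c ≤ (2 ^ L - 1) * (Q m c * (A m ^ t * Hi (m + 1) cstar)) := by
            rw [hvc]
            exact mul_le_mul_of_nonneg_right h1 (le_of_lt (mul_pos h5 hXpos))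
          have t2 : Q m c * (A m ^ t * Hi (m + 1) cstar)
              ≤ β m * (A m ^ t * Hi (m + 1) cstar) :=
            mul_le_mul_of_nonneg_right h2 (le_of_lt hXpos)
          have t3 : (2 ^ L - 1) * (Q m c * (A m ^ t * Hi (m + 1) cstar))
              ≤ (2 ^ L - 1) * (β m * (A m ^ t * Hi (m + 1) cstar)) :=
            mul_le_mul_of_nonneg_left t2 (by linarith)
          linarith
        -- cardinality of the fiber
        have hcard : (N.filter (fun c => c ⟨m, hm⟩ = t)).card ≤ (D + 1) ^ m := by
          have hinj : ∀ c ∈ N.filter (fun c => c ⟨m, hm⟩ = t),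
              ∀ c' ∈ N.filter (fun c => c ⟨m, hm⟩ = t),
              (fun (c : Fin k →₀ ℕ) => fun i : Fin m =>
                (⟨min (c ⟨i.1, by omega⟩) D, by omega⟩ : Fin (D + 1))) c
              = (fun (c : Fin k →₀ ℕ) => fun i : Fin m =>
                (⟨min (c ⟨i.1, by omega⟩) D, by omega⟩ : Fin (D + 1))) c' → c = c' := by
            intro c hc c' hc' heq
            rw [hNdef, Finset.mem_filter, Finset.mem_filter, Finset.mem_filter] at hc
            rw [hNdef, Finset.mem_filter, Finset.mem_filter, Finset.mem_filter] at hc'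
            obtain ⟨⟨⟨hcS, -, hag⟩, -⟩, hct⟩ := hc
            obtain ⟨⟨⟨hcS', -, hag'⟩, -⟩, hct'⟩ := hc'
            apply Finsupp.ext
            intro i
            rcases lt_trichotomy i.1 m with hlo | heqm | hhi
            · have hfe := congrFun heq ⟨i.1, hlo⟩
              simp only [Fin.mk.injEq] at hfe
              have hci : c ⟨i.1, by omega⟩ ≤ D := hcD c hcS _
              have hci' : c' ⟨i.1, by omega⟩ ≤ D := hcD c' hcS' _
              rw [min_eq_left hci, min_eq_left hci'] at hfe
              have hieq : (⟨i.1, by omega⟩ : Fin k) = i := Fin.ext rfl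
              rwa [hieq] at hfe
            · have hiM : i = ⟨m, hm⟩ := Fin.ext heqm
              rw [hiM, hct, hct']
            · rw [hag i (by omega), hag' i (by omega)]
          have hc1 := Finset.card_le_card_of_injOn
            (f := fun (c : Fin k →₀ ℕ) => fun i : Fin m =>
              (⟨min (c ⟨i.1, by omega⟩) D, by omega⟩ : Fin (D + 1)))
            (fun c _ => Finset.mem_univ _) (fun c hc c' hc' => hinj c hc c' hc')
          calc (N.filter (fun c => c ⟨m, hm⟩ = t)).card
              ≤ (Finset.univ : Finset (Fin m → Fin (D + 1))).card := hc1
            _ = (D + 1) ^ m := by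
                rw [Finset.card_univ, Fintype.card_fun]
                simp
        have hbnn : (0:ℤ) ≤ (2 ^ L - 1) * (β m * (A m ^ t * Hi (m + 1) cstar)) := by
          have hb1 := hβpos m hm
          have : (0:ℤ) < β m * (A m ^ t * Hi (m + 1) cstar) :=
            mul_pos (by linarith) hXpos
          nlinarith
        calc ∑ c ∈ N.filter (fun c => c ⟨m, hm⟩ = t), w c * v c
            ≤ (N.filter (fun c => c ⟨m, hm⟩ = t)).card
              • ((2 ^ L - 1) * (β m * (A m ^ t * Hi (m + 1) cstar))) :=
            Finset.sum_le_card_nsmul _ _ _ hterm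
          _ = ((N.filter (fun c => c ⟨m, hm⟩ = t)).card : ℤ)
              * ((2 ^ L - 1) * (β m * (A m ^ t * Hi (m + 1) cstar))) := nsmul_eq_mul _ _
          _ ≤ ((D + 1) ^ m : ℤ) * ((2 ^ L - 1) * (β m * (A m ^ t * Hi (m + 1) cstar))) := by
              apply mul_le_mul_of_nonneg_right _ hbnn
              exact_mod_cast hcard
          _ = (((D:ℤ) + 1) ^ m * ((2 ^ L - 1) * β m)) * (A m ^ t * Hi (m + 1) cstar) := by
              push_cast; ring
          _ ≤ (A m - 1) * (A m ^ t * Hi (m + 1) cstar) :=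
              mul_le_mul_of_nonneg_right (hKB m hm) (le_of_lt hXpos)
      -- sum over fibers
      have hNsum : ∑ c ∈ N, w c * v c
          ≤ (A m ^ cstar ⟨m, hm⟩ - 1) * Hi (m + 1) cstar := by
        rw [← Finset.sum_fiberwise_of_maps_to hNlt (fun c => w c * v c)]
        calc ∑ t ∈ Finset.range (cstar ⟨m, hm⟩),
              ∑ c ∈ N.filter (fun c => c ⟨m, hm⟩ = t), w c * v c
            ≤ ∑ t ∈ Finset.range (cstar ⟨m, hm⟩), (A m - 1) * (A m ^ t * Hi (m + 1) cstar) :=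
              Finset.sum_le_sum hfiber
          _ = (∑ t ∈ Finset.range (cstar ⟨m, hm⟩), A m ^ t) * (A m - 1) * Hi (m + 1) cstar := by
              rw [Finset.sum_mul, Finset.sum_mul]
              apply Finset.sum_congr rfl
              intro t _
              ring
          _ = (A m ^ cstar ⟨m, hm⟩ - 1) * Hi (m + 1) cstar := by rw [geom_sum_mul]
      have hTsum := ih (by omega)
      have hQcs : Q (m + 1) cstar = Q m cstar * A m ^ cstar ⟨m, hm⟩ := hQsplit m hm cstar
      have hHics : Hi m cstar = A m ^ cstar ⟨m, hm⟩ * Hi (m + 1) cstar := hHisplit m hm cstar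
      calc (∑ c ∈ h.support.filter
              (fun c => c ≠ cstar ∧ ∀ i : Fin k, m ≤ i.1 → c i = cstar i),
              w c * v c) + ∑ c ∈ N, w c * v c
          ≤ (Q m cstar - 1) * Hi m cstar + (A m ^ cstar ⟨m, hm⟩ - 1) * Hi (m + 1) cstar :=
            add_le_add hTsum hNsum
        _ = (Q (m + 1) cstar - 1) * Hi (m + 1) cstar := by
            rw [hQcs, hHics]; ring
  -- conclude
  have hfin := key k (le_refl k)
  have hTk : h.support.filter (fun c => c ≠ cstar ∧ ∀ i : Fin k, k ≤ i.1 → c i = cstar i)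
      = h.support.erase cstar := by
    ext c
    simp only [Finset.mem_filter, Finset.mem_erase]
    constructor
    · rintro ⟨hcS, hne', _⟩; exact ⟨hne', hcS⟩
    · rintro ⟨hne', hcS⟩
      exact ⟨hcS, hne', fun i hi => absurd i.2 (by omega)⟩
  have hQk : Q k cstar = v cstar := by
    simp only [hQdef, hvdef]
    apply Finset.prod_congr _ (fun _ _ => rfl)
    ext i; simp [i.2]
  have hHik : Hi k cstar = 1 := by
    have hset : Finset.univ.filter (fun i : Fin k => k ≤ i.1) = ∅ := by
      ext i
      simp only [Finset.mem_filter, Finset.mem_univ, true_and, Finset.notMem_empty, iff_false]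
      exact Nat.not_le.mpr i.2
    simp [hHidef, hset]
  rw [hTk, hQk, hHik] at hfin
  intro heval
  rw [MvPolynomial.eval_eq'] at heval
  have heval2 : ∑ c ∈ h.support, MvPolynomial.coeff c h * v c = 0 := by
    rw [← heval]
    apply Finset.sum_congr rfl
    intro c _
    simp only [hvdef, hAdef]
  have hsplit : (∑ c ∈ h.support.erase cstar, MvPolynomial.coeff c h * v c)
      + MvPolynomial.coeff cstar h * v cstar = 0 := by
    rw [Finset.sum_erase_add h.support _ hcstarS]
    exact heval2
  have habs : |MvPolynomial.coeff cstar h * v cstar|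
      ≤ ∑ c ∈ h.support.erase cstar, w c * v c := by
    have h1 : MvPolynomial.coeff cstar h * v cstar
        = -(∑ c ∈ h.support.erase cstar, MvPolynomial.coeff c h * v c) := by linarith
    rw [h1, abs_neg]
    calc |∑ c ∈ h.support.erase cstar, MvPolynomial.coeff c h * v c|
        ≤ ∑ c ∈ h.support.erase cstar, |MvPolynomial.coeff c h * v c| :=
          Finset.abs_sum_le_sum_abs _ _
      _ = ∑ c ∈ h.support.erase cstar, w c * v c := by
          apply Finset.sum_congr rfl
          intro c _
          rw [hwdef, abs_mul, abs_of_pos (hvpos c)]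
  have h1 : |MvPolynomial.coeff cstar h * v cstar| = w cstar * v cstar := by
    rw [hwdef, abs_mul, abs_of_pos (hvpos cstar)]
  have h2 : v cstar ≤ w cstar * v cstar :=
    le_mul_of_one_le_left (le_of_lt (hvpos cstar)) (hwpos cstar hcstarS)
  have h3 : w cstar * v cstar ≤ (v cstar - 1) * 1 := by
    rw [h1] at habs
    linarith
  nlinarith [hvpos cstar]
end

section
/- A first-order formula F with k free real variables is Zariski-generically true if and only if the set {a ∈ ℝ^k | F(a)} is dense in ℝ^k with respect to the Euclidean topology. -/
open MvPolynomial

/-- A set `S ⊆ ℝ^σ` is semialgebraic: by quantifier elimination (Tarski), the sets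
definable by first-order formulas over the ordered field `ℝ` (with real constants) are
exactly the finite unions of basic sets given by polynomial equations and strict
inequalities. -/
def IsSemialgebraic {σ : Type} (S : Set (σ → ℝ)) : Prop :=
  ∃ (N M : ℕ) (p : Fin N → MvPolynomial σ ℝ) (q : Fin N → Fin M → MvPolynomial σ ℝ),
    S = ⋃ i, {x | eval x (p i) = 0 ∧ ∀ j, 0 < eval x (q i j)}

/-- The complement of `S` has dimension `< k`, i.e. `S` is Zariski-generically true:
equivalently (for semialgebraic `S`), the complement is contained in the zero set of a
nonzero polynomial. -/
def ZariskiGeneric {σ : Type} (S : Set (σ → ℝ)) : Prop :=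
  ∃ h : MvPolynomial σ ℝ, h ≠ 0 ∧ ∀ x, x ∉ S → eval x h = 0

/-- The non-vanishing locus of a nonzero multivariate real polynomial is dense. -/
lemma dense_ne_zero_of_ne_zero {k : ℕ} {h : MvPolynomial (Fin k) ℝ} (hne : h ≠ 0) :
    Dense {x : Fin k → ℝ | eval x h ≠ 0} := by
  -- there exists a point where h does not vanish
  obtain ⟨a, ha⟩ : ∃ a : Fin k → ℝ, eval a h ≠ 0 := by
    by_contra hc
    push_neg at hc
    exact hne (MvPolynomial.funext (q := 0) (by simpa using hc))
  rw [Metric.dense_iff]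
  intro x r hr
  -- restrict h to the line through x and a
  set P : Polynomial ℝ :=
    aeval (fun i => Polynomial.C (x i) + Polynomial.X * Polynomial.C (a i - x i)) h with hP
  have key : ∀ t : ℝ, Polynomial.eval t P =
      eval (fun i => x i + t * (a i - x i)) h := by
    intro t
    rw [hP, aeval_def, ← Polynomial.coe_evalRingHom, eval₂_comp_left]
    congr 1
    · ext c; simp
    · funext i; simp
  have hP1 : Polynomial.eval 1 P = eval a h := by
    rw [key]
    have : (fun i => x i + 1 * (a i - x i)) = a := by funext i; ring
    rw [this]
  have hPne : P ≠ 0 := by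
    intro h0; rw [h0] at hP1; simp at hP1; exact ha hP1.symm
  -- pick a small parameter t avoiding the finitely many roots of P
  set δ : ℝ := r / (dist a x + 1) with hδ
  have hdpos : (0 : ℝ) < dist a x + 1 := by positivity
  have hδpos : 0 < δ := div_pos hr hdpos
  have hfin : Set.Finite {t : ℝ | Polynomial.IsRoot P t} :=
    Polynomial.finite_setOf_isRoot hPne
  have hinf : (Set.Ioo (0 : ℝ) δ).Infinite := Set.infinite_coe_iff.mp (Set.Ioo.infinite hδpos)
  obtain ⟨t, ht⟩ := (hinf.diff hfin).nonempty
  obtain ⟨⟨ht0, htδ⟩, htroot⟩ := ht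
  refine ⟨fun i => x i + t * (a i - x i), ?_, ?_⟩
  · -- the point lies in the ball
    rw [Metric.mem_ball]
    have h1 : dist (fun i => x i + t * (a i - x i)) x ≤ t * dist a x := by
      rw [dist_pi_le_iff (by positivity)]
      intro i
      have : dist (x i + t * (a i - x i)) (x i) = t * |a i - x i| := by
        rw [Real.dist_eq]
        have : x i + t * (a i - x i) - x i = t * (a i - x i) := by ring
        rw [this, abs_mul, abs_of_pos ht0]
      rw [this]
      have h2 : |a i - x i| ≤ dist a x := by
        rw [← Real.dist_eq]
        exact dist_le_pi_dist a x i
      exact mul_le_mul_of_nonneg_left h2 (le_of_lt ht0)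
    have h3 : t * dist a x < r := by
      have : t * dist a x ≤ t * (dist a x + 1) :=
        mul_le_mul_of_nonneg_left (by linarith) (le_of_lt ht0)
      have h4 : t * (dist a x + 1) < δ * (dist a x + 1) := by
        exact mul_lt_mul_of_pos_right htδ hdpos
      have h5 : δ * (dist a x + 1) = r := by
        rw [hδ]; field_simp
      linarith
    linarith
  · -- h does not vanish there
    intro hz
    exact htroot (by simpa [Polynomial.IsRoot, key t] using hz)

/-- A first-order formula with `k` free real variables (represented by
the semialgebraic set `S ⊆ ℝ^k` it defines) is Zariski-generically true iff the set
`S` is dense in `ℝ^k` for the Euclidean topology. -/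
theorem stmt_2 (k : ℕ) (S : Set (Fin k → ℝ)) (hS : IsSemialgebraic S) :
    ZariskiGeneric S ↔ Dense S := by
  classical
  obtain ⟨N, M, p, q, hSeq⟩ := hS
  constructor
  · rintro ⟨h, hne, hz⟩
    have hsub : {x : Fin k → ℝ | eval x h ≠ 0} ⊆ S := by
      intro x hx
      by_contra hxS
      exact hx (hz x hxS)
    exact (dense_ne_zero_of_ne_zero hne).mono hsub
  · intro hd
    set g : MvPolynomial (Fin k) ℝ :=
      ∏ i ∈ Finset.univ.filter (fun i => p i ≠ 0), p i with hg
    set Q : MvPolynomial (Fin k) ℝ :=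
      ∏ i ∈ Finset.univ.filter (fun i => p i = 0 ∧ ∀ j, q i j ≠ 0), ∏ j, q i j with hQ
    refine ⟨g * Q, ?_, ?_⟩
    · apply mul_ne_zero
      · rw [hg]
        exact Finset.prod_ne_zero_iff.mpr fun i hi => (Finset.mem_filter.mp hi).2
      · rw [hQ]
        refine Finset.prod_ne_zero_iff.mpr fun i hi => ?_
        exact Finset.prod_ne_zero_iff.mpr fun j _ => (Finset.mem_filter.mp hi).2.2 j
    · intro x hxS
      by_contra hx
      -- eval x of each relevant factor is nonzero
      have hgx : eval x g ≠ 0 := fun h0 => hx (by rw [map_mul, h0, zero_mul])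
      have hQx : eval x Q ≠ 0 := fun h0 => hx (by rw [map_mul, h0, mul_zero])
      have hpg : ∀ i : Fin N, p i ≠ 0 → eval x (p i) ≠ 0 := by
        intro i hi h0
        apply hgx
        rw [hg, map_prod]
        exact Finset.prod_eq_zero (Finset.mem_filter.mpr ⟨Finset.mem_univ i, hi⟩) h0
      have hqg : ∀ i : Fin N, (p i = 0 ∧ ∀ j, q i j ≠ 0) → ∀ j, eval x (q i j) ≠ 0 := by
        intro i hi j h0
        apply hQx
        rw [hQ, map_prod]
        refine Finset.prod_eq_zero (Finset.mem_filter.mpr ⟨Finset.mem_univ i, hi⟩) ?_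
        rw [map_prod]
        exact Finset.prod_eq_zero (Finset.mem_univ j) h0
      have hxA : ∀ i : Fin N, ¬(eval x (p i) = 0 ∧ ∀ j, 0 < eval x (q i j)) := by
        intro i hi
        exact hxS (hSeq ▸ Set.mem_iUnion.mpr ⟨i, hi⟩)
      -- build, for each i, an open neighborhood of x avoiding the i-th piece
      have key : ∀ i : Fin N, ∃ U : Set (Fin k → ℝ), IsOpen U ∧ x ∈ U ∧
          ∀ y ∈ U, ¬(eval y (p i) = 0 ∧ ∀ j, 0 < eval y (q i j)) := by
        intro i
        by_cases hpi : p i = 0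
        · by_cases hqi : ∀ j, q i j ≠ 0
          · -- some inequality fails strictly at x and keeps failing nearby
            have hx0 : eval x (p i) = 0 := by rw [hpi]; simp
            have : ¬ ∀ j, 0 < eval x (q i j) := fun hall => hxA i ⟨hx0, hall⟩
            push_neg at this
            obtain ⟨j, hj⟩ := this
            have hjneg : eval x (q i j) < 0 :=
              lt_of_le_of_ne hj (hqg i ⟨hpi, hqi⟩ j)
            refine ⟨{y | eval y (q i j) < 0},
              isOpen_lt (MvPolynomial.continuous_eval _) continuous_const, hjneg, ?_⟩
            intro y hy ⟨_, hall⟩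
            exact absurd (hall j) (not_lt.mpr (le_of_lt hy))
          · -- the piece is empty
            push_neg at hqi
            obtain ⟨j, hj⟩ := hqi
            refine ⟨Set.univ, isOpen_univ, Set.mem_univ x, ?_⟩
            intro y _ ⟨_, hall⟩
            have := hall j
            rw [hj] at this
            simp at this
        · -- the equation fails at x and nearby
          refine ⟨{y | eval y (p i) ≠ 0},
            isOpen_compl_singleton.preimage (MvPolynomial.continuous_eval _),
            hpg i hpi, ?_⟩
          intro y hy ⟨heq, _⟩
          exact hy heq
      choose U hUopen hUx hU using key
      have hOopen : IsOpen (⋂ i, U i) := isOpen_iInter_of_finite hUopen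
      have hOne : (⋂ i, U i).Nonempty := ⟨x, Set.mem_iInter.mpr hUx⟩
      obtain ⟨y, hyS, hyO⟩ := hd.exists_mem_open hOopen hOne
      rw [hSeq] at hyS
      obtain ⟨i, hyi⟩ := Set.mem_iUnion.mp hyS
      exact hU i y (Set.mem_iInter.mp hyO i) hyi
end

section
/- There is at most one function χ* assigning an integer to every semialgebraic set such that: (i) χ* is additive on finite disjoint unions of semialgebraic sets; (ii) χ* agrees with the Euler characteristic χ on compact semialgebraic sets; (iii) χ* is invariant under semialgebraic homeomorphisms. -/
open MvPolynomial CategoryTheory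

/- Singular homology with rational coefficients, its Betti numbers, and the Euler
characteristic predicate `HasEulerChar X χ` (Betti numbers finite, eventually zero,
alternating sum `χ`). -/

noncomputable def singularChainComplex (X : TopCat) : ChainComplex (ModuleCat ℚ) ℕ :=
  (AlgebraicTopology.alternatingFaceMapComplex (ModuleCat ℚ)).obj
    ((TopCat.toSSet.obj X) ⋙ ModuleCat.free ℚ)

noncomputable def SingularHomology (X : Type) [TopologicalSpace X] (k : ℕ) :
    ModuleCat ℚ :=
  (singularChainComplex (TopCat.of X)).homology k

noncomputable def betti (X : Type) [TopologicalSpace X] (k : ℕ) : ℕ :=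
  Module.finrank ℚ (SingularHomology X k)

def HasEulerChar (X : Type) [TopologicalSpace X] (χ : ℤ) : Prop :=
  ∃ d : ℕ, (∀ k, d < k → betti X k = 0) ∧
    (∀ k, Module.Finite ℚ (SingularHomology X k)) ∧
    χ = ∑ k ∈ Finset.range (d + 1), (-1) ^ k * (betti X k : ℤ)

/-- `S ⊆ ℝⁿ` and `T ⊆ ℝᵐ` are semialgebraically homeomorphic: there is a homeomorphism
between them whose graph is a semialgebraic subset of `ℝ^{n+m}`. -/
def SemialgHomeo {n m : ℕ} (S : Set (Fin n → ℝ)) (T : Set (Fin m → ℝ)) : Prop :=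
  ∃ e : ↥S ≃ₜ ↥T, IsSemialgebraic
    {z : Fin (n + m) → ℝ | ∃ x : ↥S,
      (∀ i : Fin n, z (Fin.castAdd m i) = (x : Fin n → ℝ) i) ∧
      (∀ j : Fin m, z (Fin.natAdd n j) = ((e x : ↥T) : Fin m → ℝ) j)}

/-- A modified Euler characteristic in the sense of Yao: an integer-valued invariant of
semialgebraic sets which is (i) additive on finite disjoint unions, (ii) equal to the
(singular) Euler characteristic on compact semialgebraic sets, and (iii) invariant
under semialgebraic homeomorphisms. -/
structure ModifiedEulerChar where
  toFun : ∀ n : ℕ, Set (Fin n → ℝ) → ℤ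
  additive : ∀ (n N : ℕ) (S : Fin N → Set (Fin n → ℝ)),
    (∀ i, IsSemialgebraic (S i)) →
    (Pairwise fun i j => Disjoint (S i) (S j)) →
    toFun n (⋃ i, S i) = ∑ i, toFun n (S i)
  compact_eq : ∀ (n : ℕ) (S : Set (Fin n → ℝ)), IsSemialgebraic S → IsCompact S →
    HasEulerChar ↥S (toFun n S)
  homeo_inv : ∀ (n m : ℕ) (S : Set (Fin n → ℝ)) (T : Set (Fin m → ℝ)),
    IsSemialgebraic S → IsSemialgebraic T → SemialgHomeo S T →
    toFun n S = toFun m T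

/-!
On compact semialgebraic sets both invariants are the Euler characteristic. A bounded sign cell
of finitely many polynomials is `K ∩ U` with `K` compact (its vanishing conditions, cut down to
a ball) and `U` open (its strict sign conditions), so additivity writes its invariant as
`χ(K) - χ(K \ U)`, a difference of values on compact sets. Every bounded semialgebraic set is a
finite disjoint union of such cells. Finally, a semialgebraic set splits into its parts inside
and outside the closed unit ball, and the inversion `x ↦ x / |x|²` is a semialgebraic
homeomorphism from the outer part onto a bounded set.
-/
section Closure

variable {σ : Type}

theorem isSemialgebraic_iUnion_basic {ι κ : Type} [Fintype ι] [Fintype κ]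
    (p : ι → MvPolynomial σ ℝ) (q : ι → κ → MvPolynomial σ ℝ) :
    IsSemialgebraic (⋃ i, {x | eval x (p i) = 0 ∧ ∀ j, 0 < eval x (q i j)}) := by
  let eι := Fintype.equivFin ι
  let eκ := Fintype.equivFin κ
  refine ⟨_, _, fun i => p (eι.symm i), fun i j => q (eι.symm i) (eκ.symm j), ?_⟩
  ext x
  simp only [Set.mem_iUnion, Set.mem_ofPred_eq, eι.exists_congr_left, eκ.forall_congr_left]

theorem isSemialgebraic_setOf_eval_eq_zero (p : MvPolynomial σ ℝ) :
    IsSemialgebraic {x | eval x p = 0} := by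
  simpa only [Set.iUnion_const, IsEmpty.forall_iff, implies_true, and_true] using
    isSemialgebraic_iUnion_basic (fun _ : Unit => p) fun _ => (Empty.elim : Empty → _)

theorem isSemialgebraic_setOf_eval_pos (q : MvPolynomial σ ℝ) :
    IsSemialgebraic {x | 0 < eval x q} := by
  simpa only [Set.iUnion_const, map_zero, forall_const, true_and] using
    isSemialgebraic_iUnion_basic (fun _ : Unit => 0) fun _ (_ : Unit) => q

theorem isSemialgebraic_empty : IsSemialgebraic (∅ : Set (σ → ℝ)) :=
  ⟨0, 0, Fin.elim0, Fin.elim0, by simp⟩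

theorem isSemialgebraic_univ : IsSemialgebraic (Set.univ : Set (σ → ℝ)) := by
  simpa using isSemialgebraic_setOf_eval_eq_zero (0 : MvPolynomial σ ℝ)

theorem IsSemialgebraic.union {S T : Set (σ → ℝ)} (hS : IsSemialgebraic S)
    (hT : IsSemialgebraic T) : IsSemialgebraic (S ∪ T) := by
  obtain ⟨N₁, M₁, p₁, q₁, rfl⟩ := hS
  obtain ⟨N₂, M₂, p₂, q₂, rfl⟩ := hT
  -- pad both families of inequalities with the trivial one `0 < 1`
  convert isSemialgebraic_iUnion_basic (Sum.elim p₁ p₂)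
    (Sum.elim (fun i => Sum.elim (q₁ i) 1) (fun i => Sum.elim 1 (q₂ i)))
  ext x
  simp [Sum.exists, Sum.forall]

theorem isSemialgebraic_biUnion {ι : Type} {s : Finset ι} {S : ι → Set (σ → ℝ)}
    (h : ∀ i ∈ s, IsSemialgebraic (S i)) : IsSemialgebraic (⋃ i ∈ s, S i) := by
  classical
  induction s using Finset.induction_on with
  | empty => simpa using isSemialgebraic_empty
  | insert a s _ ih =>
    rw [Finset.set_biUnion_insert]
    exact (h a (s.mem_insert_self a)).union (ih fun i hi => h i (Finset.mem_insert_of_mem hi))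

theorem isSemialgebraic_iUnion {ι : Type} [Fintype ι] {S : ι → Set (σ → ℝ)}
    (h : ∀ i, IsSemialgebraic (S i)) : IsSemialgebraic (⋃ i, S i) := by
  simpa using isSemialgebraic_biUnion (s := Finset.univ) fun i _ => h i

theorem IsSemialgebraic.inter {S T : Set (σ → ℝ)} (hS : IsSemialgebraic S)
    (hT : IsSemialgebraic T) : IsSemialgebraic (S ∩ T) := by
  obtain ⟨N₁, M₁, p₁, q₁, rfl⟩ := hS
  obtain ⟨N₂, M₂, p₂, q₂, rfl⟩ := hT
  -- over `ℝ`, the two equations `a = 0` and `b = 0` amount to `a * a + b * b = 0`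
  convert isSemialgebraic_iUnion_basic
    (fun ij : Fin N₁ × Fin N₂ => p₁ ij.1 * p₁ ij.1 + p₂ ij.2 * p₂ ij.2)
    fun ij => Sum.elim (q₁ ij.1) (q₂ ij.2)
  ext x
  simp only [Set.iUnion_inter_iUnion, Set.mem_iUnion, Set.mem_inter_iff, Set.mem_ofPred_eq,
    Prod.exists, map_add, map_mul, mul_self_add_mul_self_eq_zero, Sum.forall, Sum.elim_inl,
    Sum.elim_inr]
  tauto

theorem isSemialgebraic_iInter {ι : Type} [Fintype ι] {S : ι → Set (σ → ℝ)}
    (h : ∀ i, IsSemialgebraic (S i)) : IsSemialgebraic (⋂ i, S i) := by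
  classical
  suffices ∀ s : Finset ι, IsSemialgebraic (⋂ i ∈ s, S i) by simpa using this Finset.univ
  intro s
  induction s using Finset.induction_on with
  | empty => simpa using isSemialgebraic_univ
  | insert a s _ ih => rw [Finset.set_biInter_insert]; exact (h a).inter ih

theorem IsSemialgebraic.compl {S : Set (σ → ℝ)} (hS : IsSemialgebraic S) :
    IsSemialgebraic Sᶜ := by
  obtain ⟨N, M, p, q, rfl⟩ := hS
  have hne (f : MvPolynomial σ ℝ) : IsSemialgebraic {x | eval x f ≠ 0} := by
    convert (isSemialgebraic_setOf_eval_pos f).union (isSemialgebraic_setOf_eval_pos (-f))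
    ext x
    simp only [Set.mem_union, Set.mem_ofPred_eq, map_neg, neg_pos]
    exact ne_iff_lt_or_gt.trans or_comm
  have hnonpos (f : MvPolynomial σ ℝ) : IsSemialgebraic {x | eval x f ≤ 0} := by
    convert (isSemialgebraic_setOf_eval_pos (-f)).union (isSemialgebraic_setOf_eval_eq_zero f)
    ext x; simp [le_iff_lt_or_eq]
  convert isSemialgebraic_iInter fun i =>
    (hne (p i)).union (isSemialgebraic_iUnion fun j => hnonpos (q i j))
  ext x
  simp [imp_iff_not_or]

theorem IsSemialgebraic.diff {S T : Set (σ → ℝ)} (hS : IsSemialgebraic S)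
    (hT : IsSemialgebraic T) : IsSemialgebraic (S \ T) :=
  hS.inter hT.compl

theorem IsSemialgebraic.preimage_comp {k l : ℕ} {S : Set (Fin k → ℝ)} (hS : IsSemialgebraic S)
    (g : Fin k → Fin l) : IsSemialgebraic ((· ∘ g) ⁻¹' S) := by
  obtain ⟨N, M, p, q, rfl⟩ := hS
  refine ⟨N, M, fun i => rename g (p i), fun i j => rename g (q i j), ?_⟩
  ext z
  simp [eval_rename]

end Closure

section SignCell

variable {σ ι : Type}

def signCell (r : ι → MvPolynomial σ ℝ) (ε : ι → SignType) : Set (σ → ℝ) :=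
  {x | ∀ t, SignType.sign (eval x (r t)) = ε t}

theorem isSemialgebraic_setOf_sign_eval_eq (p : MvPolynomial σ ℝ) (s : SignType) :
    IsSemialgebraic {x | SignType.sign (eval x p) = s} := by
  rcases s.trichotomy with rfl | rfl | rfl
  · simpa only [sign_eq_neg_one_iff, map_neg, neg_pos] using isSemialgebraic_setOf_eval_pos (-p)
  · simpa only [sign_eq_zero_iff] using isSemialgebraic_setOf_eval_eq_zero p
  · simpa only [sign_eq_one_iff] using isSemialgebraic_setOf_eval_pos p

theorem isSemialgebraic_signCell [Fintype ι] (r : ι → MvPolynomial σ ℝ) (ε : ι → SignType) :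
    IsSemialgebraic (signCell r ε) := by
  simpa only [signCell, Set.ofPred_forall] using
    isSemialgebraic_iInter fun t => isSemialgebraic_setOf_sign_eval_eq (r t) (ε t)

theorem isClosed_signCell (r : ι → MvPolynomial σ ℝ) {ε : ι → SignType} (hε : ∀ t, ε t = 0) :
    IsClosed (signCell r ε) := by
  simp only [signCell, hε, sign_eq_zero_iff, Set.ofPred_forall]
  exact isClosed_iInter fun t => isClosed_eq (continuous_eval _) continuous_const

theorem isOpen_signCell [Finite ι] (r : ι → MvPolynomial σ ℝ) {ε : ι → SignType}
    (hε : ∀ t, ε t ≠ 0) : IsOpen (signCell r ε) := by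
  simp only [signCell, Set.ofPred_forall]
  refine isOpen_iInter_of_finite fun t => ?_
  rcases (ε t).trichotomy with h | h | h
  · simpa only [h, sign_eq_neg_one_iff] using isOpen_lt (continuous_eval (r t)) continuous_const
  · exact absurd h (hε t)
  · simpa only [h, sign_eq_one_iff] using isOpen_lt continuous_const (continuous_eval (r t))

theorem signCell_eq_inter (r : ι → MvPolynomial σ ℝ) (ε : ι → SignType) :
    signCell r ε = signCell (fun t : {t // ε t = 0} => r t) (fun t => ε t) ∩
      signCell (fun t : {t // ε t ≠ 0} => r t) (fun t => ε t) := by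
  ext x
  simp only [signCell, Set.mem_inter_iff, Set.mem_ofPred_eq, Subtype.forall]
  exact ⟨fun h => ⟨fun t _ => h t, fun t _ => h t⟩,
    fun h t => (em (ε t = 0)).elim (h.1 t) (h.2 t)⟩

theorem pairwise_disjoint_signCell (r : ι → MvPolynomial σ ℝ) :
    Pairwise fun ε ε' => Disjoint (signCell r ε) (signCell r ε') := fun _ _ hne =>
  Set.disjoint_left.2 fun _ hx hx' => hne (funext fun t => (hx t).symm.trans (hx' t))


theorem signCell_subset_iUnion_basic {N κ : Type} (r : ι → MvPolynomial σ ℝ)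
    {p : N → MvPolynomial σ ℝ} {q : N → κ → MvPolynomial σ ℝ} (hp : ∀ i, p i ∈ Set.range r)
    (hq : ∀ i j, q i j ∈ Set.range r) {x : σ → ℝ}
    (hx : x ∈ ⋃ i, {x | eval x (p i) = 0 ∧ ∀ j, 0 < eval x (q i j)}) :
    signCell r (fun t => SignType.sign (eval x (r t))) ⊆
      ⋃ i, {x | eval x (p i) = 0 ∧ ∀ j, 0 < eval x (q i j)} := by
  intro y hy
  obtain ⟨i, hpi, hqi⟩ := Set.mem_iUnion.1 hx
  refine Set.mem_iUnion.2 ⟨i, ?_, fun j => ?_⟩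
  · obtain ⟨t, ht⟩ := hp i
    simpa [ht, hpi] using hy t
  · obtain ⟨t, ht⟩ := hq i j
    simpa [ht, sign_pos (hqi j), sign_eq_one_iff] using hy t

end SignCell

section Inversion

variable {σ : Type} [Fintype σ]

def sumSq (x : σ → ℝ) : ℝ := ∑ i, x i ^ 2

noncomputable def sumSqPoly (σ : Type) [Fintype σ] : MvPolynomial σ ℝ := ∑ i, X i ^ 2

@[simp]
theorem eval_sumSqPoly (x : σ → ℝ) : eval x (sumSqPoly σ) = sumSq x := by
  simp [sumSqPoly, sumSq]

theorem sumSq_nonneg (x : σ → ℝ) : 0 ≤ sumSq x :=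
  Finset.sum_nonneg fun i _ => sq_nonneg (x i)

theorem sumSq_eq_zero_iff {x : σ → ℝ} : sumSq x = 0 ↔ x = 0 := by
  rw [sumSq, Finset.sum_eq_zero_iff_of_nonneg fun i _ => sq_nonneg (x i)]
  simp [funext_iff]

theorem sumSq_smul (c : ℝ) (x : σ → ℝ) : sumSq (c • x) = c ^ 2 * sumSq x := by
  simp [sumSq, Finset.mul_sum, mul_pow]

theorem continuous_sumSq : Continuous (sumSq : (σ → ℝ) → ℝ) := by
  unfold sumSq
  fun_prop

theorem isCompact_setOf_sumSq_le (R : ℝ) : IsCompact {x : σ → ℝ | sumSq x ≤ R} := by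
  refine Metric.isCompact_of_isClosed_isBounded (isClosed_le continuous_sumSq continuous_const)
    ((Metric.isBounded_iff_subset_closedBall 0).2 ⟨√R, fun x hx => ?_⟩)
  rw [mem_closedBall_zero_iff, pi_norm_le_iff_of_nonneg (Real.sqrt_nonneg R)]
  intro i
  rw [Real.norm_eq_abs]
  exact Real.abs_le_sqrt
    ((Finset.single_le_sum (fun j _ => sq_nonneg (x j)) (Finset.mem_univ i)).trans hx)

theorem isSemialgebraic_setOf_sumSq_le (R : ℝ) :
    IsSemialgebraic {x : σ → ℝ | sumSq x ≤ R} := by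
  convert (isSemialgebraic_setOf_eval_pos (sumSqPoly σ - C R)).compl using 1
  ext x
  simp

noncomputable def inversion (x : σ → ℝ) : σ → ℝ := (sumSq x)⁻¹ • x

@[simp]
theorem inversion_zero : inversion (0 : σ → ℝ) = 0 := by
  rw [inversion, smul_zero]

theorem sumSq_inversion (x : σ → ℝ) : sumSq (inversion x) = (sumSq x)⁻¹ := by
  rw [inversion, sumSq_smul, inv_pow, sq, mul_inv, mul_assoc]
  rcases eq_or_ne (sumSq x) 0 with h | h
  · simp [h]
  · rw [inv_mul_cancel₀ h, mul_one]

theorem inversion_involutive : Function.Involutive (inversion : (σ → ℝ) → σ → ℝ) := by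
  intro x
  rw [inversion, sumSq_inversion, inv_inv, inversion, smul_smul]
  rcases eq_or_ne (sumSq x) 0 with h | h
  · simp [sumSq_eq_zero_iff.1 h]
  · rw [mul_inv_cancel₀ h, one_smul]

theorem continuousOn_inversion : ContinuousOn (inversion : (σ → ℝ) → σ → ℝ) {0}ᶜ :=
  (continuous_sumSq.continuousOn.inv₀ fun _ hx => sumSq_eq_zero_iff.not.2 hx).smul
    continuousOn_id

theorem mapsTo_inversion_preimage (B : Set (σ → ℝ)) :
    Set.MapsTo inversion B (inversion ⁻¹' B) := fun x hx => by
  rwa [Set.mem_preimage, inversion_involutive x]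

noncomputable def invSmulNumerator (p D : MvPolynomial σ ℝ) : MvPolynomial σ ℝ :=
  ∑ α ∈ p.support, C (coeff α p) * (∏ i, X i ^ α i) * D ^ (p.totalDegree - ∑ i, α i)

theorem eval_invSmulNumerator (p D : MvPolynomial σ ℝ) {y : σ → ℝ} (hy : eval y D ≠ 0) :
    eval y (invSmulNumerator p D) = eval y D ^ p.totalDegree * eval ((eval y D)⁻¹ • y) p := by
  rw [invSmulNumerator, map_sum, eval_eq' ((eval y D)⁻¹ • y) p, Finset.mul_sum]
  refine Finset.sum_congr rfl fun α hα => ?_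
  have hdeg : ∑ i, α i ≤ p.totalDegree := by
    simpa [Finsupp.sum_fintype] using le_totalDegree hα
  simp only [map_mul, map_prod, map_pow, eval_C, eval_X, Pi.smul_apply, smul_eq_mul, mul_pow,
    Finset.prod_mul_distrib, pow_sub₀ _ hy hdeg]
  rw [Finset.prod_pow_eq_pow_sum, inv_pow]
  ring

theorem IsSemialgebraic.inter_preimage_inv_smul {B : Set (σ → ℝ)} (hB : IsSemialgebraic B)
    (D : MvPolynomial σ ℝ) : IsSemialgebraic {y | 0 < eval y D ∧ (eval y D)⁻¹ • y ∈ B} := by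
  obtain ⟨N, M, p, q, rfl⟩ := hB
  convert isSemialgebraic_iUnion_basic (fun i => invSmulNumerator (p i) D)
    fun i (j : Option (Fin M)) => j.elim D fun j => invSmulNumerator (q i j) D
  ext y
  simp only [Set.mem_iUnion, Set.mem_ofPred_eq, Option.forall, Option.elim_none,
    Option.elim_some]
  by_cases hy : 0 < eval y D
  · have hpow (k : ℕ) := pow_pos hy k
    simp only [hy, eval_invSmulNumerator _ _ hy.ne', mul_eq_zero, (hpow _).ne', false_or,
      mul_pos_iff_of_pos_left (hpow _), true_and]
  · simp [hy]

theorem IsSemialgebraic.preimage_inversion {B : Set (σ → ℝ)} (hB : IsSemialgebraic B) :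
    IsSemialgebraic (inversion ⁻¹' B) := by
  convert (hB.inter_preimage_inv_smul (sumSqPoly σ)).union
    (hB.inter (isSemialgebraic_setOf_eval_eq_zero (sumSqPoly σ))) using 1
  ext y
  rcases (sumSq_nonneg y).lt_or_eq with hy | hy
  · simp [inversion, hy, hy.ne']
  · obtain rfl := sumSq_eq_zero_iff.1 hy.symm
    simp [sumSq]

end Inversion

section Homeo

variable {n m : ℕ}

theorem semialgHomeo_of_isSemialgebraic_graph {S : Set (Fin n → ℝ)} {T : Set (Fin m → ℝ)}
    (e : S ≃ₜ T) {f : (Fin n → ℝ) → Fin m → ℝ} (hf : ∀ x : S, (e x : Fin m → ℝ) = f x)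
    (hgraph : IsSemialgebraic {z : Fin (n + m) → ℝ |
      z ∘ Fin.castAdd m ∈ S ∧ z ∘ Fin.natAdd n = f (z ∘ Fin.castAdd m)}) :
    SemialgHomeo S T := by
  refine ⟨e, ?_⟩
  convert hgraph using 1
  ext z
  simp only [Set.mem_ofPred_eq, hf]
  constructor
  · rintro ⟨x, hx, hfx⟩
    rw [show z ∘ Fin.castAdd m = x from funext hx]
    exact ⟨x.2, funext hfx⟩
  · rintro ⟨hz, hfz⟩
    exact ⟨⟨_, hz⟩, fun i => rfl, congrFun hfz⟩

variable {B : Set (Fin n → ℝ)}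

noncomputable def inversionHomeomorph (hB0 : (0 : Fin n → ℝ) ∉ B) :
    B ≃ₜ (inversion ⁻¹' B : Set (Fin n → ℝ)) where
  toFun := (mapsTo_inversion_preimage B).restrict
  invFun := (Set.mapsTo_preimage inversion B).restrict
  left_inv x := Subtype.ext (inversion_involutive x.1)
  right_inv y := Subtype.ext (inversion_involutive y.1)
  continuous_toFun :=
    (continuousOn_inversion.mono (Set.subset_compl_singleton_iff.2 hB0)).mapsToRestrict _
  continuous_invFun := (continuousOn_inversion.mono (Set.subset_compl_singleton_iff.2
    (by rwa [Set.mem_preimage, inversion_zero]))).mapsToRestrict _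

theorem IsSemialgebraic.graph_inversion (hB : IsSemialgebraic B) (hB0 : (0 : Fin n → ℝ) ∉ B) :
    IsSemialgebraic {z : Fin (n + n) → ℝ |
      z ∘ Fin.castAdd n ∈ B ∧ z ∘ Fin.natAdd n = inversion (z ∘ Fin.castAdd n)} := by
  -- on `B`, where `|x|² ≠ 0`, the equation `y = |x|⁻² • x` is polynomial: `|x|² • y = x`
  convert (hB.preimage_comp (Fin.castAdd n)).inter (isSemialgebraic_iInter fun i =>
    isSemialgebraic_setOf_eval_eq_zero
      (rename (Fin.castAdd n) (sumSqPoly (Fin n)) * X (Fin.natAdd n i) - X (Fin.castAdd n i)))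
    using 1
  ext z
  simp only [Set.mem_ofPred_eq, Set.mem_inter_iff, Set.mem_preimage, Set.mem_iInter, map_sub,
    map_mul, eval_rename, eval_sumSqPoly, eval_X, sub_eq_zero, and_congr_right_iff]
  intro hz
  have hz0 : z ∘ Fin.castAdd n ≠ 0 := fun h => hB0 (h ▸ hz)
  rw [inversion, eq_inv_smul_iff₀ (sumSq_eq_zero_iff.not.2 hz0), _root_.funext_iff]
  rfl

theorem semialgHomeo_inversion (hB : IsSemialgebraic B) (hB0 : (0 : Fin n → ℝ) ∉ B) :
    SemialgHomeo B (inversion ⁻¹' B) :=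
  semialgHomeo_of_isSemialgebraic_graph (inversionHomeomorph hB0) (fun _ => rfl)
    (hB.graph_inversion hB0)

end Homeo

theorem HasEulerChar.unique {X : Type} [TopologicalSpace X] {a b : ℤ}
    (ha : HasEulerChar X a) (hb : HasEulerChar X b) : a = b := by
  obtain ⟨d, hd, -, rfl⟩ := ha
  obtain ⟨e, he, -, rfl⟩ := hb
  have extend : ∀ d e : ℕ, d ≤ e → (∀ k, d < k → betti X k = 0) →
      ∑ k ∈ Finset.range (d + 1), (-1 : ℤ) ^ k * (betti X k : ℤ) =
        ∑ k ∈ Finset.range (e + 1), (-1 : ℤ) ^ k * (betti X k : ℤ) := by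
    intro d e hde hd
    refine Finset.sum_subset (Finset.range_subset_range.2 (by omega)) fun k _ hk => ?_
    rw [hd k (by simpa using hk), Nat.cast_zero, mul_zero]
  rcases le_total d e with h | h
  exacts [extend d e h hd, (extend e d h he).symm]

namespace ModifiedEulerChar

variable {n : ℕ}

theorem toFun_iUnion (χ : ModifiedEulerChar) {ι : Type} [Fintype ι] {S : ι → Set (Fin n → ℝ)}
    (hS : ∀ i, IsSemialgebraic (S i)) (hd : Pairwise fun i j => Disjoint (S i) (S j)) :
    χ.toFun n (⋃ i, S i) = ∑ i, χ.toFun n (S i) := by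
  let e := (Fintype.equivFin ι).symm
  rw [← e.surjective.iUnion_comp, χ.additive n _ _ (fun k => hS (e k))
    (hd.comp_of_injective e.injective), e.sum_comp fun i => χ.toFun n (S i)]

theorem toFun_union (χ : ModifiedEulerChar) {S T : Set (Fin n → ℝ)} (hS : IsSemialgebraic S)
    (hT : IsSemialgebraic T) (hST : Disjoint S T) :
    χ.toFun n (S ∪ T) = χ.toFun n S + χ.toFun n T := by
  rw [Set.union_eq_iUnion, χ.toFun_iUnion (Bool.forall_bool.2 ⟨hT, hS⟩)
    (pairwise_disjoint_on_bool.2 hST), Fintype.sum_bool, cond_true, cond_false]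

variable (χ₁ χ₂ : ModifiedEulerChar)

theorem eq_of_isCompact {S : Set (Fin n → ℝ)} (hS : IsSemialgebraic S) (hSc : IsCompact S) :
    χ₁.toFun n S = χ₂.toFun n S :=
  (χ₁.compact_eq n S hS hSc).unique (χ₂.compact_eq n S hS hSc)

theorem eq_of_isCompact_inter_isOpen {K U : Set (Fin n → ℝ)} (hK : IsSemialgebraic K)
    (hU : IsSemialgebraic U) (hKc : IsCompact K) (hUo : IsOpen U) :
    χ₁.toFun n (K ∩ U) = χ₂.toFun n (K ∩ U) := by
  have h₁ := χ₁.toFun_union (hK.inter hU) (hK.diff hU) Set.disjoint_sdiff_inter.symm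
  have h₂ := χ₂.toFun_union (hK.inter hU) (hK.diff hU) Set.disjoint_sdiff_inter.symm
  rw [Set.inter_union_sdiff] at h₁ h₂
  have hK₁₂ := eq_of_isCompact χ₁ χ₂ hK hKc
  have hKU₁₂ := eq_of_isCompact χ₁ χ₂ (hK.diff hU) (hKc.diff hUo)
  omega

theorem eq_of_isClosed_inter_isOpen {F U : Set (Fin n → ℝ)} (hF : IsSemialgebraic F)
    (hU : IsSemialgebraic U) (hFc : IsClosed F) (hUo : IsOpen U) {R : ℝ}
    (hR : F ∩ U ⊆ {x | sumSq x ≤ R}) :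
    χ₁.toFun n (F ∩ U) = χ₂.toFun n (F ∩ U) := by
  have hFU : F ∩ U = F ∩ {x | sumSq x ≤ R} ∩ U := by
    rw [Set.inter_right_comm, Set.inter_eq_left.2 hR]
  rw [hFU]
  exact eq_of_isCompact_inter_isOpen χ₁ χ₂ (hF.inter (isSemialgebraic_setOf_sumSq_le R)) hU
    ((isCompact_setOf_sumSq_le R).inter_left hFc) hUo

theorem eq_of_signCell {ι : Type} [Fintype ι] (r : ι → MvPolynomial (Fin n) ℝ)
    (ε : ι → SignType) {R : ℝ} (hR : signCell r ε ⊆ {x | sumSq x ≤ R}) :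
    χ₁.toFun n (signCell r ε) = χ₂.toFun n (signCell r ε) := by
  rw [signCell_eq_inter] at hR ⊢
  exact eq_of_isClosed_inter_isOpen χ₁ χ₂ (isSemialgebraic_signCell _ _)
    (isSemialgebraic_signCell _ _) (isClosed_signCell _ fun t => t.2)
    (isOpen_signCell _ fun t => t.2) hR

theorem eq_of_subset_setOf_sumSq_le {S : Set (Fin n → ℝ)} (hS : IsSemialgebraic S) {R : ℝ}
    (hR : S ⊆ {x | sumSq x ≤ R}) : χ₁.toFun n S = χ₂.toFun n S := by
  classical
  obtain ⟨N, M, p, q, hSpq⟩ := hS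
  let r := Sum.elim p fun ij : Fin N × Fin M => q ij.1 ij.2
  have hcover : S = ⋃ ε : {ε // signCell r ε ⊆ S}, signCell r ε := by
    refine Set.Subset.antisymm (fun x hx => Set.mem_iUnion.2 ?_) (Set.iUnion_subset fun ε => ε.2)
    refine ⟨⟨fun t => SignType.sign (eval x (r t)), ?_⟩, fun t => rfl⟩
    rw [hSpq] at hx ⊢
    exact signCell_subset_iUnion_basic r (fun i => ⟨Sum.inl i, rfl⟩)
      (fun i j => ⟨Sum.inr (i, j), rfl⟩) hx
  have hcells : ∀ ε : {ε // signCell r ε ⊆ S}, IsSemialgebraic (signCell r ε) :=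
    fun ε => isSemialgebraic_signCell r ε
  have hdisj := (pairwise_disjoint_signCell r).comp_of_injective
    (Subtype.val_injective (p := fun ε => signCell r ε ⊆ S))
  rw [hcover, χ₁.toFun_iUnion hcells hdisj, χ₂.toFun_iUnion hcells hdisj]
  exact Fintype.sum_congr _ _ fun ε => eq_of_signCell χ₁ χ₂ r ε (ε.2.trans hR)

theorem eq_of_subset_setOf_one_lt_sumSq {B : Set (Fin n → ℝ)} (hB : IsSemialgebraic B)
    (hB1 : B ⊆ {x | 1 < sumSq x}) :
    χ₁.toFun n B = χ₂.toFun n B := by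
  have hB0 : (0 : Fin n → ℝ) ∉ B := fun h => absurd (hB1 h) (by simp [sumSq])
  have hBT := semialgHomeo_inversion hB hB0
  rw [χ₁.homeo_inv n n B _ hB hB.preimage_inversion hBT,
    χ₂.homeo_inv n n B _ hB hB.preimage_inversion hBT]
  refine eq_of_subset_setOf_sumSq_le χ₁ χ₂ hB.preimage_inversion (R := 1) fun y hy => ?_
  have hy1 : 1 < (sumSq y)⁻¹ := sumSq_inversion y ▸ hB1 hy
  exact ((one_lt_inv₀ (inv_pos.1 (one_pos.trans hy1))).1 hy1).le

end ModifiedEulerChar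

/-- There is at most one modified Euler characteristic: any two
integer-valued invariants of semialgebraic sets satisfying (i) additivity on finite
disjoint unions, (ii) agreement with the Euler characteristic on compact semialgebraic
sets, and (iii) invariance under semialgebraic homeomorphisms, coincide on all
semialgebraic sets. -/
theorem stmt_7 (χ₁ χ₂ : ModifiedEulerChar) (n : ℕ) (S : Set (Fin n → ℝ))
    (hS : IsSemialgebraic S) :
    χ₁.toFun n S = χ₂.toFun n S := by
  have hball := isSemialgebraic_setOf_sumSq_le (σ := Fin n) 1
  have hnear := hS.inter hball
  have hfar := hS.diff hball
  rw [← Set.inter_union_sdiff S {x | sumSq x ≤ 1},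
    χ₁.toFun_union hnear hfar Set.disjoint_sdiff_inter.symm,
    χ₂.toFun_union hnear hfar Set.disjoint_sdiff_inter.symm,
    ModifiedEulerChar.eq_of_subset_setOf_sumSq_le χ₁ χ₂ hnear Set.inter_subset_right,
    ModifiedEulerChar.eq_of_subset_setOf_one_lt_sumSq χ₁ χ₂ hfar
      fun x hx => show 1 < sumSq x from not_le.1 hx.2]
end

section
/- Let ξ ∈ ℝⁿ, let f be a real polynomial of degree d with zero set Z ⊆ ℝⁿ, and suppose ξ ∉ Z and Z is unbounded. Define f^ξ(X) := ‖X−ξ‖^{2d} · f(ξ + ‖X−ξ‖^{−2}(X−ξ)). Then f^ξ is a polynomial and its zero set Z^ξ equals ι_ξ(Z) ∪ {ξ}, where ι_ξ(x) = ξ + (x−ξ)/‖x−ξ‖² is the inversion in the unit sphere centered at ξ; moreover Z^ξ is homeomorphic to the one-point compactification of Z. -/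
/-!
With `Q(x) = ∑ (xᵢ - ξᵢ)²`, the inverted point `ι_ξ x` has coordinates
`(ξᵢ Q(x) + (xᵢ - ξᵢ)) / Q(x)`. Substituting these into a monomial of `f` of degree `k ≤ d` and
multiplying by `Q^d` leaves the polynomial `∏ (ξᵢ Q + (Xᵢ - ξᵢ))^{mᵢ} · Q^{d-k}`, and their sum
is the required `g`. Away from `ξ` it vanishes exactly where `f ∘ ι_ξ` does, and at `ξ` every
term vanishes as soon as `d > 0`, which holds because `f` is not constant: it vanishes somewhere
but not at `ξ`.

As `Z` is closed and misses `ξ`, it misses a ball `B(ξ, ε)`, so `ι_ξ(Z)` lies in the ball of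
radius `1/ε`, and `Z^ξ = ι_ξ(Z) ∪ {ξ}` is compact. The inversion is a homeomorphism of
`ℝⁿ ∖ {ξ}`, so it embeds `Z` into `Z^ξ` with image `Z^ξ ∖ {ξ}`; a compact Hausdorff space
containing a copy of `Z` as the complement of one point is the one-point compactification of `Z`.
-/

open MvPolynomial Topology

namespace MvPolynomial

variable {σ τ R K : Type*} [CommSemiring R] [Semifield K]

theorem totalDegree_pos_of_eval_ne_eval {p : MvPolynomial σ R} {x y : σ → R}
    (h : eval x p ≠ eval y p) : 0 < p.totalDegree := by
  refine Nat.pos_of_ne_zero fun h0 => h ?_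
  rw [totalDegree_eq_zero_iff_eq_C.mp h0, eval_C, eval_C]

theorem eval_bind₁ (y : τ → R) (a : σ → MvPolynomial τ R) (p : MvPolynomial σ R) :
    eval y (bind₁ a p) = eval (fun i => eval y (a i)) p :=
  eval₂Hom_bind₁ (RingHom.id R) y a p

theorem eval_monomial_div (z : σ → K) (t : K) (m : σ →₀ ℕ) (c : K) :
    eval (fun i => z i / t) (monomial m c) = eval z (monomial m c) / t ^ m.degree := by
  simp only [eval_monomial, Finsupp.prod, div_pow, Finset.prod_div_distrib,
    Finset.prod_pow_eq_pow_sum, Finsupp.degree_apply, mul_div_assoc]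

/-- `q ^ d * p (a / q)` with the denominators cleared, provided `p.totalDegree ≤ d`. -/
noncomputable def clearDenoms (p : MvPolynomial σ K) (d : ℕ) (a : σ → MvPolynomial τ K)
    (q : MvPolynomial τ K) : MvPolynomial τ K :=
  ∑ m ∈ p.support, bind₁ a (monomial m (coeff m p)) * q ^ (d - m.degree)

theorem eval_clearDenoms {p : MvPolynomial σ K} {d : ℕ} (hp : p.totalDegree ≤ d)
    (a : σ → MvPolynomial τ K) {q : MvPolynomial τ K} {y : τ → K} (hq : eval y q ≠ 0) :
    eval y (clearDenoms p d a q) = eval y q ^ d * eval (fun i => eval y (a i) / eval y q) p := by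
  conv_rhs => rw [p.as_sum, map_sum, Finset.mul_sum]
  rw [clearDenoms, map_sum]
  refine Finset.sum_congr rfl fun m hm => ?_
  have hm : m.degree ≤ d := (le_totalDegree hm).trans hp
  rw [map_mul, map_pow, eval_bind₁, eval_monomial_div, pow_sub₀ _ hq hm]
  field_simp

theorem eval_clearDenoms_eq_zero (p : MvPolynomial σ K) {d : ℕ} (hd : 0 < d)
    {a : σ → MvPolynomial τ K} {q : MvPolynomial τ K} {y : τ → K}
    (ha : ∀ i, eval y (a i) = 0) (hq : eval y q = 0) :
    eval y (clearDenoms p d a q) = 0 := by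
  rw [clearDenoms, map_sum]
  refine Finset.sum_eq_zero fun m _ => ?_
  rw [map_mul, map_pow, eval_bind₁, hq]
  rcases lt_or_ge m.degree d with hm | hm
  · rw [zero_pow (Nat.sub_ne_zero_of_lt hm), mul_zero]
  · have hm0 : m ≠ 0 := by
      rintro rfl; simp at hm; omega
    classical
    rw [show (fun i => eval y (a i)) = 0 from _root_.funext ha, eval_zero, constantCoeff_monomial,
      if_neg hm0, zero_mul]

end MvPolynomial

section Inversion

variable {ι : Type*} [Fintype ι] {ξ x : ι → ℝ}

noncomputable def sqDist (ξ x : ι → ℝ) : ℝ := ∑ j, (x j - ξ j) ^ 2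

-- Inversion in the Euclidean unit sphere about `ξ`; division by zero makes `ξ` a fixed point.
noncomputable def piInversion (ξ x : ι → ℝ) : ι → ℝ := fun i => ξ i + (x i - ξ i) / sqDist ξ x

@[simp] theorem sqDist_self (ξ : ι → ℝ) : sqDist ξ ξ = 0 := by simp [sqDist]

theorem sqDist_pos (h : x ≠ ξ) : 0 < sqDist ξ x := by
  obtain ⟨i, hi⟩ := Function.ne_iff.mp h
  have hi : x i - ξ i ≠ 0 := sub_ne_zero.mpr hi
  exact Finset.sum_pos' (fun _ _ => sq_nonneg _) ⟨i, Finset.mem_univ i, by positivity⟩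

theorem sqDist_piInversion (h : x ≠ ξ) : sqDist ξ (piInversion ξ x) = (sqDist ξ x)⁻¹ := by
  have hq := (sqDist_pos h).ne'
  simp only [sqDist, piInversion, add_sub_cancel_left, div_pow, ← Finset.sum_div]
  rw [← sqDist, sq]
  field_simp

theorem piInversion_ne_center (h : x ≠ ξ) : piInversion ξ x ≠ ξ := by
  intro he
  have := sqDist_piInversion h
  rw [he, sqDist_self] at this
  exact (inv_pos.mpr (sqDist_pos h)).ne this

theorem piInversion_piInversion (h : x ≠ ξ) : piInversion ξ (piInversion ξ x) = x := by
  have hq := (sqDist_pos h).ne'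
  funext i
  simp only [piInversion, sqDist_piInversion h, add_sub_cancel_left]
  field_simp
  ring

theorem continuousOn_piInversion : ContinuousOn (piInversion ξ) {ξ}ᶜ := by
  have hq : Continuous (sqDist ξ) := by unfold sqDist; fun_prop
  refine continuousOn_pi.mpr fun i => continuousOn_const.add ?_
  exact ((continuous_apply i).sub continuous_const).continuousOn.div hq.continuousOn
    fun x hx => (sqDist_pos hx).ne'

theorem dist_le_sqrt_sqDist (x ξ : ι → ℝ) : dist x ξ ≤ √(sqDist ξ x) := by
  refine (dist_pi_le_iff (Real.sqrt_nonneg _)).mpr fun i => ?_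
  rw [Real.dist_eq]
  exact Real.abs_le_sqrt (Finset.single_le_sum (f := fun j => (x j - ξ j) ^ 2)
    (fun j _ => sq_nonneg _) (Finset.mem_univ i))

noncomputable def piInversionHomeomorph (ξ : ι → ℝ) :
    ({ξ}ᶜ : Set (ι → ℝ)) ≃ₜ ({ξ}ᶜ : Set (ι → ℝ)) where
  toFun x := ⟨piInversion ξ x, piInversion_ne_center x.2⟩
  invFun x := ⟨piInversion ξ x, piInversion_ne_center x.2⟩
  left_inv x := Subtype.ext (piInversion_piInversion x.2)
  right_inv x := Subtype.ext (piInversion_piInversion x.2)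
  continuous_toFun := continuousOn_piInversion.domRestrict.subtype_mk _
  continuous_invFun := continuousOn_piInversion.domRestrict.subtype_mk _

variable {s : Set (ι → ℝ)}

theorem mem_piInversion_image_iff (hξ : ξ ∉ s) (hx : x ≠ ξ) :
    x ∈ piInversion ξ '' s ↔ piInversion ξ x ∈ s := by
  refine ⟨?_, fun h => ⟨_, h, piInversion_piInversion hx⟩⟩
  rintro ⟨z, hz, rfl⟩
  rwa [piInversion_piInversion (ne_of_mem_of_not_mem hz hξ)]

theorem isClosed_piInversion_image_union (hs : IsClosed s) (hξ : ξ ∉ s) :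
    IsClosed (piInversion ξ '' s ∪ {ξ}) := by
  have hcompl : (piInversion ξ '' s ∪ {ξ})ᶜ = {ξ}ᶜ ∩ piInversion ξ ⁻¹' sᶜ := by
    ext x
    by_cases hx : x = ξ
    · simp [hx]
    · simp [hx, mem_piInversion_image_iff hξ hx]
  rw [← isOpen_compl_iff, hcompl]
  exact continuousOn_piInversion.isOpen_inter_preimage isOpen_compl_singleton hs.isOpen_compl

theorem isBounded_piInversion_image (hs : IsClosed s) (hξ : ξ ∉ s) :
    Bornology.IsBounded (piInversion ξ '' s) := by
  obtain ⟨ε, hε, hball⟩ := Metric.mem_nhds_iff.mp (hs.isOpen_compl.mem_nhds hξ)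
  refine (Metric.isBounded_closedBall (x := ξ) (r := ε⁻¹)).subset ?_
  rintro _ ⟨z, hz, rfl⟩
  have hzξ : z ≠ ξ := ne_of_mem_of_not_mem hz hξ
  have hε_le : ε ≤ √(sqDist ξ z) :=
    (not_lt.mp fun h => hball (Metric.mem_ball.mpr h) hz).trans (dist_le_sqrt_sqDist z ξ)
  calc dist (piInversion ξ z) ξ ≤ √(sqDist ξ (piInversion ξ z)) := dist_le_sqrt_sqDist _ _
    _ = (√(sqDist ξ z))⁻¹ := by rw [sqDist_piInversion hzξ, Real.sqrt_inv]
    _ ≤ ε⁻¹ := inv_anti₀ hε hε_le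

theorem isCompact_piInversion_image_union (hs : IsClosed s) (hξ : ξ ∉ s) :
    IsCompact (piInversion ξ '' s ∪ {ξ}) :=
  Metric.isCompact_of_isClosed_isBounded (isClosed_piInversion_image_union hs hξ)
    ((isBounded_piInversion_image hs hξ).union Bornology.isBounded_singleton)

theorem isEmbedding_restrict_piInversion (hξ : ξ ∉ s) :
    IsEmbedding (s.domRestrict (piInversion ξ)) :=
  (IsEmbedding.subtypeVal.comp (piInversionHomeomorph ξ).isEmbedding).comp
    (IsEmbedding.inclusion fun _ hz => ne_of_mem_of_not_mem hz hξ)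

noncomputable def OnePoint.equivPiInversionImageUnion (hs : IsClosed s) (hξ : ξ ∉ s) :
    OnePoint s ≃ₜ ↥(piInversion ξ '' s ∪ {ξ}) :=
  haveI := isCompact_iff_compactSpace.mp (isCompact_piInversion_image_union hs hξ)
  OnePoint.equivOfIsEmbeddingOfRangeEq ⟨ξ, Or.inr rfl⟩
    (Set.codRestrict (s.domRestrict (piInversion ξ)) _ fun z => Or.inl ⟨z, z.2, rfl⟩)
    ((isEmbedding_restrict_piInversion hξ).codRestrict _ _) <| by
      ext ⟨y, hy⟩
      simp only [Set.mem_range, Set.mem_compl_iff, Set.mem_singleton_iff, Subtype.ext_iff,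
        Subtype.exists]
      constructor
      · rintro ⟨z, hz, rfl⟩
        exact piInversion_ne_center (ne_of_mem_of_not_mem hz hξ)
      · intro hyξ
        obtain ⟨z, hz, rfl⟩ := hy.resolve_right hyξ
        exact ⟨z, hz, rfl⟩

end Inversion

section InversionPoly

variable {ι : Type*} [Fintype ι] {ξ x : ι → ℝ}

noncomputable def sqDistPoly (ξ : ι → ℝ) : MvPolynomial ι ℝ := ∑ j, (X j - C (ξ j)) ^ 2

@[simp] theorem eval_sqDistPoly : eval x (sqDistPoly ξ) = sqDist ξ x := by
  simp [sqDistPoly, sqDist]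

noncomputable def inversionPoly (ξ : ι → ℝ) (f : MvPolynomial ι ℝ) (d : ℕ) : MvPolynomial ι ℝ :=
  clearDenoms f d (fun i => C (ξ i) * sqDistPoly ξ + (X i - C (ξ i))) (sqDistPoly ξ)

theorem eval_inversionPoly {f : MvPolynomial ι ℝ} {d : ℕ} (hd : f.totalDegree ≤ d)
    (hx : x ≠ ξ) : eval x (inversionPoly ξ f d) = sqDist ξ x ^ d * eval (piInversion ξ x) f := by
  have hq := (sqDist_pos hx).ne'
  rw [inversionPoly, eval_clearDenoms hd _ (by rwa [eval_sqDistPoly]), eval_sqDistPoly]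
  congr 3
  funext i
  simp only [map_add, map_mul, map_sub, eval_C, eval_X, eval_sqDistPoly, piInversion]
  field_simp

theorem eval_inversionPoly_center (f : MvPolynomial ι ℝ) {d : ℕ} (hd : 0 < d) :
    eval ξ (inversionPoly ξ f d) = 0 :=
  eval_clearDenoms_eq_zero f hd (by simp) (by simp)

theorem zeroSet_inversionPoly {f : MvPolynomial ι ℝ} {d : ℕ} (hd : f.totalDegree ≤ d)
    (hd0 : 0 < d) (hξ : eval ξ f ≠ 0) :
    {x | eval x (inversionPoly ξ f d) = 0} = piInversion ξ '' {x | eval x f = 0} ∪ {ξ} := by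
  ext x
  by_cases hx : x = ξ
  · simp [hx, eval_inversionPoly_center f hd0]
  · simp only [Set.mem_ofPred_eq, Set.mem_union, Set.mem_singleton_iff, hx, or_false,
      mem_piInversion_image_iff (show ξ ∉ {x | eval x f = 0} from hξ) hx,
      eval_inversionPoly hd hx, mul_eq_zero, pow_eq_zero_iff hd0.ne', (sqDist_pos hx).ne',
      false_or]

end InversionPoly

/-- Let `f` be a real polynomial in `n` variables of degree `d` with
zero set `Z ⊆ ℝⁿ`, let `ξ ∉ Z`, and assume `Z` is unbounded.  Then the function
`f^ξ(X) = ‖X−ξ‖^{2d} · f(ξ + ‖X−ξ‖^{−2}(X−ξ))` is (given by) a polynomial `g`, the zero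
set `Z^ξ` of `g` equals `ι_ξ(Z) ∪ {ξ}` where `ι_ξ(x) = ξ + (x−ξ)/‖x−ξ‖²` is the
inversion in the unit sphere centered at `ξ`, and `Z^ξ` is homeomorphic to the
one-point compactification of `Z`.  (Here `‖x−ξ‖² = Σᵢ (xᵢ−ξᵢ)²` is the squared
Euclidean norm.) -/
theorem stmt_16 (n : ℕ) (f : MvPolynomial (Fin n) ℝ) (d : ℕ)
    (hd : f.totalDegree = d) (ξ : Fin n → ℝ) (hξ : eval ξ f ≠ 0)
    (hunb : ¬ Bornology.IsBounded {x : Fin n → ℝ | eval x f = 0}) :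
    ∃ g : MvPolynomial (Fin n) ℝ,
      (∀ x : Fin n → ℝ, x ≠ ξ →
        eval x g = (∑ i, (x i - ξ i) ^ 2) ^ d *
          eval (fun i => ξ i + (x i - ξ i) / (∑ j, (x j - ξ j) ^ 2)) f) ∧
      {x : Fin n → ℝ | eval x g = 0} =
        (fun x : Fin n → ℝ =>
            (fun i => ξ i + (x i - ξ i) / (∑ j, (x j - ξ j) ^ 2))) ''
          {x : Fin n → ℝ | eval x f = 0} ∪ {ξ} ∧
      Nonempty
        (↥{x : Fin n → ℝ | eval x g = 0} ≃ₜ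
          OnePoint ↥{x : Fin n → ℝ | eval x f = 0}) := by
  obtain ⟨z, hz⟩ : {x : Fin n → ℝ | eval x f = 0}.Nonempty :=
    Set.nonempty_iff_ne_empty.mpr fun h => hunb (h ▸ Bornology.isBounded_empty)
  have hd0 : 0 < d :=
    hd ▸ totalDegree_pos_of_eval_ne_eval ((show eval z f = 0 from hz).trans_ne hξ.symm)
  have hZ : IsClosed {x : Fin n → ℝ | eval x f = 0} :=
    isClosed_eq (continuous_eval f) continuous_const
  have hzero := zeroSet_inversionPoly hd.le hd0 hξ
  refine ⟨inversionPoly ξ f d, fun x hx => eval_inversionPoly hd.le hx, hzero, ?_⟩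
  rw [hzero]
  exact ⟨(OnePoint.equivPiInversionImageUnion hZ hξ).symm⟩
end
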